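/- arXiv:2005.06261 — 3 statements merged into one kernel-verified Lean document; each statement's English description precedes it below -/
import Mathlib

section
/- If a ledger l is sound and a sound transition l → l' is applied, then the resulting ledger l' is sound. -/
/-- A transition appends act `m` (authored by `author m`) to agent `v`'s history. -/
def LedgerTransition {V M : Type*} [DecidableEq V] (author : M → V)
    (l l' : V → List M) (v : V) (m : M) : Prop :=
  l' = Function.update l v (l v ++ [m])

/-- `h` restricted to acts authored by `u`. -/
def restrictH {V M : Type*} [DecidableEq V] (author : M → V) (h : List M) (u : V) : List M :=
  h.filter (fun m => author m = u)

/-- A ledger is sound if every agent's view of `v`'s acts is a prefix of `v`'s own acts. -/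
def SoundLedger {V M : Type*} [DecidableEq V] (author : M → V) (l : V → List M) : Prop :=
  ∀ u v : V, restrictH author (l u) v <+: restrictH author (l v) v

/-- The transition is sound: output (`author m = v`), or input with the new view of the
author's acts a prefix of the author's own acts. -/
def SoundTransition {V M : Type*} [DecidableEq V] (author : M → V)
    (l l' : V → List M) (v : V) (m : M) : Prop :=
  LedgerTransition author l l' v m ∧
    (author m = v ∨
      (author m ≠ v ∧ restrictH author (l' v) (author m) <+: restrictH author (l (author m)) (author m)))

/-- If `l` is sound and a sound transition `l → l'` is applied, then `l'` is sound. -/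
theorem sound_transition_preserves_soundness {V M : Type*} [DecidableEq V]
    (author : M → V) (l l' : V → List M) (v : V) (m : M)
    (hl : SoundLedger author l) (ht : SoundTransition author l l' v m) :
    SoundLedger author l' := by
  obtain ⟨hlt, hsound⟩ := ht
  subst hlt
  intro a b
  by_cases ha : a = v
  · subst ha
    simp only [Function.update_self]
    by_cases hb : b = a
    · subst hb
      simp [Function.update_self]
    · rw [Function.update_of_ne hb]
      by_cases hm : author m = b
      · rcases hsound with h1 | ⟨_, h2⟩
        · exact absurd (hm.symm.trans h1) hb
        · rw [← hm]
          simpa [Function.update_self] using h2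
      · have : restrictH author (l a ++ [m]) b = restrictH author (l a) b := by
          simp [restrictH, List.filter_append, hm]
        rw [this]
        exact hl a b
  · rw [Function.update_of_ne ha]
    by_cases hb : b = v
    · subst hb
      simp only [Function.update_self]
      have : restrictH author (l b) b <+: restrictH author (l b ++ [m]) b := by
        simp only [restrictH, List.filter_append]
        exact List.prefix_append _ _
      exact (hl a b).trans this
    · rw [Function.update_of_ne hb]
      exact hl a b
end

section
/- If a set of social contract rules R has no two rules whose (pre-state, act) pairs unify with most general unifier θ while their post-states instantiated by θ differ, then R satisfies explicit nondeterminism; and conversely, if such a pair of rules exists with the differing instantiated post-states having a common ground instance witnessing the difference, then R violates explicit nondeterminism. -/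
/-- First-order terms over a signature with (infinitely many) constants/function
symbols indexed by `ℕ` and variables indexed by `ℕ`. -/
inductive Tm : Type
  | var : ℕ → Tm
  | app : ℕ → List Tm → Tm

/-- Applying a substitution to a term. -/
def Tm.subst (θ : ℕ → Tm) : Tm → Tm
  | .var n => θ n
  | .app f args => .app f (args.attach.map (fun a => a.1.subst θ))
decreasing_by
  have := List.sizeOf_lt_of_mem a.2
  simp at *; omega

/-- A term is ground if no variable occurs in it. -/
def Tm.isGround : Tm → Prop
  | .var _ => False
  | .app _ args => ∀ a ∈ args.attach, a.1.isGround
decreasing_by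
  have := List.sizeOf_lt_of_mem a.2
  simp at *; omega

/-- A social contract rule `(pre-state, act, post-state)`. -/
structure Rule where
  pre : Tm
  act : Tm
  post : Tm

/-- `R` satisfies explicit nondeterminism: any two ground instances of rules of `R`
with the same ground pre-state and the same ground act have equal ground post-states. -/
def ExplicitND (R : Set Rule) : Prop :=
  ∀ r1 ∈ R, ∀ r2 ∈ R, ∀ θ1 θ2 : ℕ → Tm,
    (r1.pre.subst θ1).isGround → (r1.act.subst θ1).isGround → (r1.post.subst θ1).isGround →
    (r2.pre.subst θ2).isGround → (r2.act.subst θ2).isGround → (r2.post.subst θ2).isGround →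
    r1.pre.subst θ1 = r2.pre.subst θ2 →
    r1.act.subst θ1 = r2.act.subst θ2 →
    r1.post.subst θ1 = r2.post.subst θ2

/-- The syntactic condition: there is no unifier (pair of substitutions for the
respective, renamed-apart, rules) of the (pre-state, act) pairs of two rules of `R`
under which the instantiated post-states differ on some further grounding. -/
def NoDivergentUnifier (R : Set Rule) : Prop :=
  ∀ r1 ∈ R, ∀ r2 ∈ R, ∀ θ1 θ2 : ℕ → Tm,
    r1.pre.subst θ1 = r2.pre.subst θ2 →
    r1.act.subst θ1 = r2.act.subst θ2 →
    ∀ σ : ℕ → Tm, (r1.post.subst θ1).subst σ = (r2.post.subst θ2).subst σ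

theorem Tm.subst_app (θ : ℕ → Tm) (f : ℕ) (args : List Tm) :
    (Tm.app f args).subst θ = .app f (args.map (·.subst θ)) := by
  rw [Tm.subst]
  simp

theorem Tm.isGround_app (f : ℕ) (args : List Tm) :
    (Tm.app f args).isGround ↔ ∀ a ∈ args, a.isGround := by
  rw [Tm.isGround]
  simp

theorem Tm.subst_subst : ∀ (t : Tm) (θ σ : ℕ → Tm),
    (t.subst θ).subst σ = t.subst (fun n => (θ n).subst σ)
  | .var n, θ, σ => by simp [Tm.subst]
  | .app f args, θ, σ => by
    rw [Tm.subst_app, Tm.subst_app, Tm.subst_app, List.map_map]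
    congr 1
    apply List.map_congr_left
    intro a ha
    exact Tm.subst_subst a θ σ
decreasing_by
  have := List.sizeOf_lt_of_mem ha
  simp at *; omega

theorem Tm.subst_var : ∀ (t : Tm), t.subst Tm.var = t
  | .var n => by simp [Tm.subst]
  | .app f args => by
    rw [Tm.subst_app]
    congr 1
    conv_rhs => rw [← List.map_id args]
    apply List.map_congr_left
    intro a ha
    exact Tm.subst_var a
decreasing_by
  have := List.sizeOf_lt_of_mem ha
  simp at *; omega

theorem Tm.subst_isGround : ∀ (t : Tm) (g : ℕ → Tm),
    (∀ n, (g n).isGround) → (t.subst g).isGround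
  | .var n, g, hg => by simpa [Tm.subst] using hg n
  | .app f args, g, hg => by
    rw [Tm.subst_app, Tm.isGround_app]
    intro a ha
    rw [List.mem_map] at ha
    obtain ⟨b, hb, rfl⟩ := ha
    exact Tm.subst_isGround b g hg
decreasing_by
  have := List.sizeOf_lt_of_mem hb
  simp at *; omega

/-- Two fixed grounding substitutions. -/
def g1 : ℕ → Tm := fun n => .app (2 * n) []
def g2 : ℕ → Tm := fun n => .app (2 * n + 1) []

theorem g1_ground (n : ℕ) : (g1 n).isGround := by
  rw [g1, Tm.isGround_app]; simp

theorem g2_ground (n : ℕ) : (g2 n).isGround := by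
  rw [g2, Tm.isGround_app]; simp

theorem Tm.subst_subst_subst (t : Tm) (θ σ g : ℕ → Tm) :
    ((t.subst θ).subst σ).subst g = t.subst (fun n => ((θ n).subst σ).subst g) := by
  rw [Tm.subst_subst, Tm.subst_subst]
  congr 1
  funext n
  rw [← Tm.subst_subst]

theorem Tm.eq_of_subst_g : ∀ (t s : Tm),
    t.subst g1 = s.subst g1 → t.subst g2 = s.subst g2 → t = s
  | .var n, .var m, h1, _ => by
    simp only [Tm.subst, g1] at h1
    injection h1 with hf _
    have : n = m := by omega
    rw [this]
  | .var n, .app f a, h1, h2 => by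
    rw [Tm.subst_app] at h1 h2
    simp only [Tm.subst, g1, g2] at h1 h2
    injection h1 with hf1 _
    injection h2 with hf2 _
    omega
  | .app f a, .var m, h1, h2 => by
    rw [Tm.subst_app] at h1 h2
    simp only [Tm.subst, g1, g2] at h1 h2
    injection h1 with hf1 _
    injection h2 with hf2 _
    omega
  | .app f a, .app f' a', h1, h2 => by
    rw [Tm.subst_app, Tm.subst_app] at h1 h2
    injection h1 with hf h1'
    injection h2 with _ h2'
    subst hf
    congr 1
    have hlen : a.length = a'.length := by
      have := congrArg List.length h1'
      simpa using this
    apply List.ext_getElem hlen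
    intro i hi hi'
    have e1 : a[i].subst g1 = a'[i].subst g1 := by
      have : (a.map (·.subst g1))[i]'(by simpa) = (a'.map (·.subst g1))[i]'(by simpa) := by
        simp only [h1']
      simpa using this
    have e2 : a[i].subst g2 = a'[i].subst g2 := by
      have : (a.map (·.subst g2))[i]'(by simpa) = (a'.map (·.subst g2))[i]'(by simpa) := by
        simp only [h2']
      simpa using this
    exact Tm.eq_of_subst_g a[i] a'[i] e1 e2
decreasing_by
  all_goals
    have := List.sizeOf_lt_of_mem (List.getElem_mem hi)
    simp at *; omega

/-- `R` satisfies explicit nondeterminism if and only if no two rules of `R` have a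
unifier of their (pre-state, act) pairs whose instantiated post-states differ on some
grounding. -/
theorem explicitND_iff_noDivergentUnifier (R : Set Rule) :
    ExplicitND R ↔ NoDivergentUnifier R := by
  constructor
  · intro h r1 hr1 r2 hr2 θ1 θ2 hpre hact σ
    apply Tm.eq_of_subst_g
    · have ground : ∀ (t : Tm) (θ : ℕ → Tm),
          (t.subst (fun n => ((θ n).subst σ).subst g1)).isGround :=
        fun t θ => Tm.subst_isGround _ _ (fun n => Tm.subst_isGround _ _ g1_ground)
      have e := h r1 hr1 r2 hr2 _ _ (ground _ θ1) (ground _ θ1) (ground _ θ1)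
        (ground _ θ2) (ground _ θ2) (ground _ θ2)
        (by rw [← Tm.subst_subst_subst, ← Tm.subst_subst_subst, hpre])
        (by rw [← Tm.subst_subst_subst, ← Tm.subst_subst_subst, hact])
      rw [Tm.subst_subst_subst, Tm.subst_subst_subst]
      exact e
    · have ground : ∀ (t : Tm) (θ : ℕ → Tm),
          (t.subst (fun n => ((θ n).subst σ).subst g2)).isGround :=
        fun t θ => Tm.subst_isGround _ _ (fun n => Tm.subst_isGround _ _ g2_ground)
      have e := h r1 hr1 r2 hr2 _ _ (ground _ θ1) (ground _ θ1) (ground _ θ1)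
        (ground _ θ2) (ground _ θ2) (ground _ θ2)
        (by rw [← Tm.subst_subst_subst, ← Tm.subst_subst_subst, hpre])
        (by rw [← Tm.subst_subst_subst, ← Tm.subst_subst_subst, hact])
      rw [Tm.subst_subst_subst, Tm.subst_subst_subst]
      exact e
  · intro h r1 hr1 r2 hr2 θ1 θ2 _ _ _ _ _ _ hpre hact
    have := h r1 hr1 r2 hr2 θ1 θ2 hpre hact Tm.var
    rwa [Tm.subst_var, Tm.subst_var] at this
end

section
/- In the egalitarian currency social contract, for every agent the balance computed from its own history equals the number of clock ticks received plus total payments received minus total payments made, and is nonnegative at every reachable state; moreover the sum of all agents' balances (computed over any sound ledger's diagonals plus undelivered payments) never exceeds |V| times the number of clock ticks issued. -/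
/-- A configuration of the egalitarian currency contract:
`n` ticks issued by the clock so far; per agent, the number of ticks received, the
current balance, the total payments received, and the total payments made; and the
multiset of in-flight payment messages `(payer, payee, amount)`. -/
structure EgalConfig (V : Type*) where
  n : ℕ
  ticks : V → ℕ
  balc : V → ℤ
  recv : V → ℤ
  sent : V → ℤ
  inflight : Multiset (V × V × ℕ)

variable {V : Type*}

/-- Transitions of the egalitarian currency contract. -/
def EgalStep [DecidableEq V] (c c' : EgalConfig V) : Prop :=
  -- the clock issues a tick
  (c' = { c with n := c.n + 1 }) ∨
  -- agent v receives a tick (mints one coin)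
  (∃ v : V, c.ticks v < c.n ∧
    c' = { c with ticks := Function.update c.ticks v (c.ticks v + 1),
                  balc := Function.update c.balc v (c.balc v + 1) }) ∨
  -- agent u pays x > 0 to v; allowed only if Balance ≥ x
  (∃ (u v : V) (x : ℕ), 0 < x ∧ (x : ℤ) ≤ c.balc u ∧
    c' = { c with balc := Function.update c.balc u (c.balc u - x),
                  sent := Function.update c.sent u (c.sent u + x),
                  inflight := c.inflight + {(u, v, x)} }) ∨
  -- an in-flight payment (u, v, x) is delivered to v
  (∃ (u v : V) (x : ℕ), (u, v, x) ∈ c.inflight ∧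
    c' = { c with balc := Function.update c.balc v (c.balc v + x),
                  recv := Function.update c.recv v (c.recv v + x),
                  inflight := c.inflight.erase (u, v, x) })

/-- Reachability from the initial configuration (no ticks, all balances zero). -/
def EgalReachable [DecidableEq V] (c : EgalConfig V) : Prop :=
  Relation.ReflTransGen EgalStep
    ⟨0, fun _ => 0, fun _ => 0, fun _ => 0, fun _ => 0, 0⟩ c

def EgalInv [DecidableEq V] [Fintype V] (c : EgalConfig V) : Prop :=
    (∀ v : V, c.balc v = (c.ticks v : ℤ) + c.recv v - c.sent v) ∧
    (∀ v : V, 0 ≤ c.balc v) ∧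
    ((∑ v : V, c.balc v) + (c.inflight.map (fun p => (p.2.2 : ℤ))).sum
        = ∑ v : V, (c.ticks v : ℤ)) ∧
    (∀ v : V, c.ticks v ≤ c.n)

theorem EgalInv_step [DecidableEq V] [Fintype V] {c c' : EgalConfig V}
    (hs : EgalStep c c') (h : EgalInv c) : EgalInv c' := by
  obtain ⟨h1, h2, h3, h4⟩ := h
  rcases hs with rfl | ⟨v, hv, rfl⟩ | ⟨u, v, x, hx, hxb, rfl⟩ | ⟨u, v, x, hm, rfl⟩
  · exact ⟨h1, h2, h3, fun w => (h4 w).trans (Nat.le_succ _)⟩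
  · refine ⟨?_, ?_, ?_, ?_⟩
    · intro w
      by_cases hw : w = v
      · subst hw; simp only [Function.update_self]; rw [h1 w]; push_cast; ring
      · simp [Function.update_of_ne hw, h1 w]
    · intro w
      by_cases hw : w = v
      · subst hw; simp only [Function.update_self]; linarith [h2 w]
      · simp [Function.update_of_ne hw, h2 w]
    · have hcast : ∀ w : V, ((Function.update c.ticks v (c.ticks v + 1)) w : ℤ)
          = Function.update (fun w => (c.ticks w : ℤ)) v ((c.ticks v : ℤ) + 1) w := by
        intro w
        by_cases hw : w = v
        · subst hw; simp
        · simp [Function.update_of_ne hw]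
      simp only [hcast, Finset.sum_update_of_mem (Finset.mem_univ v)]
      have hb := Finset.sum_eq_add_sum_sdiff_singleton_of_mem (Finset.mem_univ v) c.balc
      have htk := Finset.sum_eq_add_sum_sdiff_singleton_of_mem (Finset.mem_univ v)
        (fun w => (c.ticks w : ℤ))
      linarith [h3]
    · intro w
      by_cases hw : w = v
      · subst hw; simpa using hv
      · simp [Function.update_of_ne hw, h4 w]
  · refine ⟨?_, ?_, ?_, h4⟩
    · intro w
      by_cases hw : w = u
      · subst hw; simp only [Function.update_self]; rw [h1 w]; ring
      · simp [Function.update_of_ne hw, h1 w]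
    · intro w
      by_cases hw : w = u
      · subst hw; simp only [Function.update_self]; linarith
      · simp [Function.update_of_ne hw, h2 w]
    · simp only [Finset.sum_update_of_mem (Finset.mem_univ u), Multiset.map_add,
        Multiset.sum_add, Multiset.map_singleton, Multiset.sum_singleton]
      have hb := Finset.sum_eq_add_sum_sdiff_singleton_of_mem (Finset.mem_univ u) c.balc
      linarith [h3]
  · refine ⟨?_, ?_, ?_, h4⟩
    · intro w
      by_cases hw : w = v
      · subst hw; simp only [Function.update_self]; rw [h1 w]; ring
      · simp [Function.update_of_ne hw, h1 w]
    · intro w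
      by_cases hw : w = v
      · subst hw; simp only [Function.update_self]
        have := h2 w; positivity
      · simp [Function.update_of_ne hw, h2 w]
    · have he : (u, v, x) ::ₘ c.inflight.erase (u, v, x) = c.inflight :=
        Multiset.cons_erase hm
      have hsum : ((c.inflight.erase (u, v, x)).map (fun p => (p.2.2 : ℤ))).sum
          = (c.inflight.map (fun p => (p.2.2 : ℤ))).sum - x := by
        rw [← he]; simp
      simp only [Finset.sum_update_of_mem (Finset.mem_univ v), hsum]
      have hb := Finset.sum_eq_add_sum_sdiff_singleton_of_mem (Finset.mem_univ v) c.balc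
      linarith [h3]

/-- In the egalitarian currency: (1) each agent's balance equals ticks received plus
payments received minus payments made, and is nonnegative; (2) the sum of all balances
plus the total value of in-flight payments equals the total number of tick deliveries,
which is at most `|V| · n`. -/
theorem egalitarian_currency_invariant [DecidableEq V] [Fintype V]
    (c : EgalConfig V) (hc : EgalReachable c) :
    (∀ v : V, c.balc v = (c.ticks v : ℤ) + c.recv v - c.sent v) ∧
    (∀ v : V, 0 ≤ c.balc v) ∧
    ((∑ v : V, c.balc v) + (c.inflight.map (fun p => (p.2.2 : ℤ))).sum
        = ∑ v : V, (c.ticks v : ℤ)) ∧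
    (∑ v : V, (c.ticks v : ℤ)) ≤ (Fintype.card V : ℤ) * c.n := by
  have hinv : EgalInv c := by
    induction hc with
    | refl => exact ⟨fun v => rfl, fun v => le_refl 0, by simp, fun v => le_refl 0⟩
    | tail _ hs ih => exact EgalInv_step hs ih
  obtain ⟨h1, h2, h3, h4⟩ := hinv
  refine ⟨h1, h2, h3, ?_⟩
  calc (∑ v : V, (c.ticks v : ℤ)) ≤ ∑ _v : V, (c.n : ℤ) :=
        Finset.sum_le_sum (fun v _ => by exact_mod_cast h4 v)
    _ = (Fintype.card V : ℤ) * c.n := by simp [mul_comm]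
end
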